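/- arXiv:2408.11116 — 5 statements merged into one kernel-verified Lean document; each statement's English description precedes it below -/
import Mathlib

section
/- Let λ^(1), λ^(2), μ, ν be integer partitions of n with λ^(1) ⪯ λ^(2) in the dominance order. If there exists a three-dimensional binary contingency table with marginals (λ^(2), μ, ν), then there exists one with marginals (λ^(1), μ, ν). -/
open Finset

/-- An integer partition of `n`: a non-increasing, finitely supported sequence
of non-negative integers summing to `n` (indexed from 0). -/
def IsPartition (l : ℕ → ℕ) (n : ℕ) : Prop :=
  Antitone l ∧ ∃ N, (∀ i, N ≤ i → l i = 0) ∧ ∑ i ∈ Finset.range N, l i = n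

/-- Dominance order: `l ⪯ m`. -/
def DomLE (l m : ℕ → ℕ) : Prop :=
  ∀ k, ∑ i ∈ Finset.range k, l i ≤ ∑ i ∈ Finset.range k, m i

/-- Strict dominance. -/
def DomLT (l m : ℕ → ℕ) : Prop := DomLE l m ∧ l ≠ m

/-- A three-dimensional binary contingency table is identified with its (finite)
set of 1-entries.  `HasMarginals S l m v` says the marginals of the table `S`
are `l`, `m`, `v`. -/
def HasMarginals (S : Finset (ℕ × ℕ × ℕ)) (l m v : ℕ → ℕ) : Prop :=
  (∀ i, (S.filter fun p => p.1 = i).card = l i) ∧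
  (∀ j, (S.filter fun p => p.2.1 = j).card = m j) ∧
  (∀ k, (S.filter fun p => p.2.2 = k).card = v k)

/-- Conjugate partition (0-indexed): `conj l r = |{j : l j ≥ r+1}|`. -/
noncomputable def conj (l : ℕ → ℕ) (r : ℕ) : ℕ := Set.ncard {j | r + 1 ≤ l j}

/-- A pyramid: a downward-closed binary contingency table. -/
def IsPyramid (S : Finset (ℕ × ℕ × ℕ)) : Prop :=
  ∀ i1 j1 k1 i2 j2 k2 : ℕ, i1 ≤ i2 → j1 ≤ j2 → k1 ≤ k2 →
    (i2, j2, k2) ∈ S → (i1, j1, k1) ∈ S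

/-- Degree of a vertex in a hypergraph on vertex set `ℕ` given by its edge set. -/
def hdeg (E : Finset (Finset ℕ)) (v : ℕ) : ℕ := (E.filter fun e => v ∈ e).card

/-- `DegSeqOf E l`: the non-increasingly sorted degree sequence of the
hypergraph with edge set `E` is `l` (i.e. the degrees are `l` up to a
relabelling of the vertices). -/
def DegSeqOf (E : Finset (Finset ℕ)) (l : ℕ → ℕ) : Prop :=
  ∃ e : ℕ ≃ ℕ, ∀ v, hdeg E (e v) = l v

/-- Size of the largest Durfee square of `m` (0-indexed parts). -/
noncomputable def Durfee (m : ℕ → ℕ) : ℕ := sSup {k | ∀ i < k, i + 1 ≤ m i}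

/-! Moving a 1-entry of the table from the slice `i = a` to the slice `i = b` along a line
`(·, j, k)` that meets the first slice but not the second transfers one unit of the first
marginal from part `a` to part `b` and keeps the other two marginals; such a line exists as soon
as `λ_b < λ_a`. If `λ¹ ≺ λ²`, let `a` be the first index where they differ and `b` the first one
with `λ²_b < λ¹_b`. Then `a < b` and `λ²_b < λ¹_b ≤ λ¹_a < λ²_a`, the transferred partition
still dominates `λ¹` (its partial sums only drop between `a` and `b`, where those of `λ²` were
strictly larger), and `∑ (λ²_i - λ¹_i)⁺` decreases by one. -/

def moveUnit (l : ℕ → ℕ) (a b : ℕ) : ℕ → ℕ :=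
  fun i => if i = a then l a - 1 else if i = b then l b + 1 else l i

lemma moveUnit_add_ite {l : ℕ → ℕ} {a b : ℕ} (hab : a ≠ b) (ha : 0 < l a) (i : ℕ) :
    moveUnit l a b i + (if i = a then 1 else 0) = l i + (if i = b then 1 else 0) := by
  unfold moveUnit
  split_ifs <;> subst_vars <;> omega

lemma sum_moveUnit_add_ite {l : ℕ → ℕ} {a b : ℕ} (hab : a ≠ b) (ha : 0 < l a) (s : Finset ℕ) :
    ∑ i ∈ s, moveUnit l a b i + (if a ∈ s then 1 else 0)
      = ∑ i ∈ s, l i + (if b ∈ s then 1 else 0) := by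
  rw [← sum_ite_eq' s a (fun _ => 1), ← sum_ite_eq' s b (fun _ => 1), ← sum_add_distrib,
    ← sum_add_distrib]
  exact sum_congr rfl fun i _ => moveUnit_add_ite hab ha i

lemma card_filter_insert_erase_add_ite {α : Type*} [DecidableEq α] {S : Finset α} {x y : α}
    (hx : x ∈ S) (hy : y ∉ S) (P : α → Prop) [DecidablePred P] :
    ((insert y (S.erase x)).filter P).card + (if P x then 1 else 0)
      = (S.filter P).card + (if P y then 1 else 0) := by
  have hy' : y ∉ (S.filter P).erase x := fun h => hy (mem_filter.1 (mem_of_mem_erase h)).1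
  rw [filter_insert, filter_erase]
  by_cases hPx : P x
  · have hx' : x ∈ S.filter P := mem_filter.2 ⟨hx, hPx⟩
    have := card_erase_add_one hx'
    split_ifs <;> simp only [card_insert_of_notMem hy', Nat.add_zero] <;> omega
  · have hx' : x ∉ S.filter P := fun h => hPx (mem_filter.1 h).2
    rw [erase_eq_of_notMem hx'] at hy' ⊢
    split_ifs <;> simp only [card_insert_of_notMem hy']

lemma HasMarginals.moveUnit {S : Finset (ℕ × ℕ × ℕ)} {l m v : ℕ → ℕ} (hS : HasMarginals S l m v)
    {a b : ℕ} (hba : l b < l a) : ∃ S', HasMarginals S' (moveUnit l a b) m v := by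
  obtain ⟨h₁, h₂, h₃⟩ := hS
  have hab : a ≠ b := by rintro rfl; omega
  have ha : 0 < l a := by omega
  have hfiber_a : ((S.filter (·.1 = a)).image Prod.snd).card = l a := by
    rw [card_image_of_injOn fun p hp p' hp' h =>
      Prod.ext ((mem_filter.1 hp).2.trans (mem_filter.1 hp').2.symm) h, h₁]
  have hfiber_b : ((S.filter (·.1 = b)).image Prod.snd).card ≤ l b :=
    (card_image_le).trans (h₁ b).le
  obtain ⟨q, hqa, hqb⟩ := exists_mem_notMem_of_card_lt_card (hfiber_b.trans_lt (hfiber_a ▸ hba))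
  obtain ⟨p, hp, rfl⟩ := mem_image.1 hqa
  have hx : (a, p.2) ∈ S := by
    obtain ⟨hpS, rfl⟩ := mem_filter.1 hp
    exact hpS
  have hy : (b, p.2) ∉ S := fun h => hqb (mem_image.2 ⟨_, mem_filter.2 ⟨h, rfl⟩, rfl⟩)
  refine ⟨insert (b, p.2) (S.erase (a, p.2)), fun i => ?_, fun j => ?_, fun k => ?_⟩
  · have h := card_filter_insert_erase_add_ite hx hy (·.1 = i)
    have h' := moveUnit_add_ite hab ha i
    simp only [h₁, eq_comm (a := i)] at h h'
    omega
  · simpa [h₂] using card_filter_insert_erase_add_ite hx hy (·.2.1 = j)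
  · simpa [h₃] using card_filter_insert_erase_add_ite hx hy (·.2.2 = k)

lemma DomLE.moveUnit {l₁ l₂ : ℕ → ℕ} (hdom : DomLE l₁ l₂) {a b : ℕ} (hab : a < b)
    (ha : l₁ a < l₂ a) (hle : ∀ i < b, l₁ i ≤ l₂ i) : DomLE l₁ (moveUnit l₂ a b) := by
  intro k
  have key := sum_moveUnit_add_ite hab.ne (l := l₂) (by omega) (range k)
  simp only [mem_range] at key
  by_cases hak : a < k
  · by_cases hbk : b < k
    · have := hdom k
      simp only [hak, hbk, if_true] at key
      omega
    · have : ∑ i ∈ range k, l₁ i < ∑ i ∈ range k, l₂ i :=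
        sum_lt_sum (fun i hi => hle i (by have := mem_range.1 hi; omega)) ⟨a, mem_range.2 hak, ha⟩
      simp only [hak, hbk, if_true, if_false] at key
      omega
  · have := hdom k
    simp only [hak, show ¬ b < k by omega, if_false] at key
    omega

lemma sum_moveUnit_tsub_add_one {l₁ l₂ : ℕ → ℕ} {a b : ℕ} {s : Finset ℕ} (hab : a ≠ b)
    (ha : l₁ a < l₂ a) (hb : l₂ b < l₁ b) (has : a ∈ s) :
    ∑ i ∈ s, (moveUnit l₂ a b i - l₁ i) + 1 = ∑ i ∈ s, (l₂ i - l₁ i) := by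
  have h : ∀ i, moveUnit l₂ a b i - l₁ i + (if i = a then 1 else 0) = l₂ i - l₁ i := by
    intro i
    unfold moveUnit
    split_ifs <;> subst_vars <;> omega
  rw [← sum_congr rfl fun i _ => h i, sum_add_distrib, sum_ite_eq' s a (fun _ => 1), if_pos has]

lemma DomLE.exists_moveUnit_indices {l₁ l₂ : ℕ → ℕ} {N : ℕ} (hz₁ : ∀ i, N ≤ i → l₁ i = 0)
    (hz₂ : ∀ i, N ≤ i → l₂ i = 0) (hsum : ∑ i ∈ range N, l₁ i = ∑ i ∈ range N, l₂ i)
    (hdom : DomLE l₁ l₂) (hne : l₁ ≠ l₂) :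
    ∃ a b, a < b ∧ b < N ∧ l₁ a < l₂ a ∧ l₂ b < l₁ b ∧ ∀ i < b, l₁ i ≤ l₂ i := by
  have hexa : ∃ i, l₁ i ≠ l₂ i := Function.ne_iff.1 hne
  have hne_a : l₁ (Nat.find hexa) ≠ l₂ (Nat.find hexa) := Nat.find_spec hexa
  have heq : ∀ i < Nat.find hexa, l₁ i = l₂ i := fun i hi => not_not.1 (Nat.find_min hexa hi)
  have ha : l₁ (Nat.find hexa) < l₂ (Nat.find hexa) := by
    have h := hdom (Nat.find hexa + 1)
    have hpre : ∑ i ∈ range (Nat.find hexa), l₁ i = ∑ i ∈ range (Nat.find hexa), l₂ i :=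
      sum_congr rfl fun i hi => heq i (mem_range.1 hi)
    rw [sum_range_succ, sum_range_succ] at h
    omega
  have haN : Nat.find hexa < N := by
    by_contra h
    have := hz₂ _ (not_lt.1 h)
    omega
  have hexb : ∃ i, l₂ i < l₁ i := by
    by_contra! h
    have := sum_lt_sum (fun i _ => h i) ⟨_, mem_range.2 haN, ha⟩
    omega
  have hb := Nat.find_spec hexb
  refine ⟨Nat.find hexa, Nat.find hexb, ?_, ?_, ha, hb, fun i hi => not_lt.1 (Nat.find_min hexb hi)⟩
  · by_contra! h
    rcases h.lt_or_eq with h | h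
    · have := heq _ h
      omega
    · rw [h] at hb
      omega
  · by_contra h
    have := hz₁ _ (not_lt.1 h)
    omega

theorem exists_hasMarginals_of_domLE {l₁ l₂ m v : ℕ → ℕ} {N : ℕ} (hanti : Antitone l₁)
    (hz₁ : ∀ i, N ≤ i → l₁ i = 0) (hz₂ : ∀ i, N ≤ i → l₂ i = 0)
    (hsum : ∑ i ∈ range N, l₁ i = ∑ i ∈ range N, l₂ i) (hdom : DomLE l₁ l₂)
    (hS : ∃ S, HasMarginals S l₂ m v) : ∃ S, HasMarginals S l₁ m v := by
  by_cases hne : l₁ = l₂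
  · exact hne ▸ hS
  obtain ⟨a, b, hab, hbN, ha, hb, hle⟩ := hdom.exists_moveUnit_indices hz₁ hz₂ hsum hne
  obtain ⟨S, hS⟩ := hS
  have hba : l₂ b < l₂ a := hb.trans ((hanti hab.le).trans_lt ha)
  have hsum' := sum_moveUnit_add_ite hab.ne (l := l₂) (by omega) (range N)
  simp only [mem_range, hbN, hab.trans hbN, if_true] at hsum'
  refine exists_hasMarginals_of_domLE hanti hz₁ (fun i hi => ?_) (by omega)
    (hdom.moveUnit hab ha hle) (hS.moveUnit hba)
  simp only [moveUnit, (hab.trans hbN).trans_le hi |>.ne', hbN.trans_le hi |>.ne', if_false,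
    hz₂ i hi]
termination_by ∑ i ∈ range N, (l₂ i - l₁ i)
decreasing_by
  have := sum_moveUnit_tsub_add_one hab.ne ha hb (mem_range.2 (hab.trans hbN))
  omega

lemma IsPartition.eventually_sum_range {l : ℕ → ℕ} {n : ℕ} (hl : IsPartition l n) :
    ∀ᶠ N in Filter.atTop, (∀ i, N ≤ i → l i = 0) ∧ ∑ i ∈ range N, l i = n := by
  obtain ⟨-, N₀, hz, hs⟩ := hl
  filter_upwards [Filter.eventually_ge_atTop N₀] with N hN
  exact ⟨fun i hi => hz i (hN.trans hi), (eventually_constant_sum hz hN).trans hs⟩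

theorem stmt2_general (n : ℕ) (l1 l2 m v : ℕ → ℕ)
    (hl1 : IsPartition l1 n) (hl2 : IsPartition l2 n)
    (hdom : DomLE l1 l2)
    (h : ∃ S : Finset (ℕ × ℕ × ℕ), HasMarginals S l2 m v) :
    ∃ S : Finset (ℕ × ℕ × ℕ), HasMarginals S l1 m v := by
  obtain ⟨N, ⟨hz₁, hs₁⟩, hz₂, hs₂⟩ :=
    (hl1.eventually_sum_range.and hl2.eventually_sum_range).exists
  exact exists_hasMarginals_of_domLE hl1.1 hz₁ hz₂ (hs₁.trans hs₂.symm) hdom h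

/-- monotonicity of realizability in the first marginal. -/
theorem stmt2 (n : ℕ) (l1 l2 m v : ℕ → ℕ)
    (hl1 : IsPartition l1 n) (hl2 : IsPartition l2 n)
    (hm : IsPartition m n) (hv : IsPartition v n)
    (hdom : DomLE l1 l2)
    (h : ∃ S : Finset (ℕ × ℕ × ℕ), HasMarginals S l2 m v) :
    ∃ S : Finset (ℕ × ℕ × ℕ), HasMarginals S l1 m v :=
  stmt2_general n l1 l2 m v hl1 hl2 hdom h
end

section
/- Let λ^(1), λ^(2), μ^(1), μ^(2), ν^(1), ν^(2) be integer partitions of n with λ^(1) ⪯ λ^(2), μ^(1) ⪯ μ^(2), ν^(1) ⪯ ν^(2) in the dominance order. If (λ^(2), μ^(2), ν^(2)) admits a three-dimensional binary contingency table with those marginals, then so does (λ^(1), μ^(1), ν^(1)). -/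
open Finset

/-!
If `l₁ ⪯ l₂` and `l₁ ≠ l₂`, pick `s` with `l₁ s < l₂ s` and let `t > s` be the first index with
`l₂ t < l₁ t`. Moving one unit of `l₂` from `s` to `t` gives a sequence still dominating `l₁`
(the partial sums of `l₂` exceed those of `l₁` by at least one on `(s, t]`) and strictly closer to
`l₁`; since `l₂ t < l₁ t ≤ l₁ s < l₂ s`, slice `t` of a realizing table is thinner than slice `s`,
so one entry can be moved from slice `s` to slice `t` without touching the other marginals.
Iterating reaches `l₁`; the other two marginals are handled by rotating the coordinates.
-/

section Transfer

variable {l l₁ l₂ l' : ℕ → ℕ} {N s t : ℕ}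

/- `l' + Pi.single s 1 = l + Pi.single t 1` says that `l'` arises from `l` by moving one unit
from index `s` to index `t`; the additive form avoids truncated subtraction. -/

lemma sum_range_add_ite_of_transfer (h : l' + Pi.single s 1 = l + Pi.single t 1) (k : ℕ) :
    ∑ i ∈ range k, l' i + (if s < k then 1 else 0) =
      ∑ i ∈ range k, l i + (if t < k then 1 else 0) := by
  simpa [sum_add_distrib, sum_pi_single'] using congrArg (fun f => ∑ i ∈ range k, f i) h

lemma apply_of_transfer (h : l' + Pi.single s 1 = l + Pi.single t 1) (hst : s ≠ t) :
    l' s + 1 = l s ∧ l' t = l t + 1 ∧ ∀ i, i ≠ s → i ≠ t → l' i = l i := by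
  have hi i := congrFun h i
  simp only [Pi.add_apply, Pi.single_apply] at hi
  refine ⟨?_, ?_, fun i his hit => ?_⟩
  · simpa [hst] using hi s
  · simpa [hst.symm] using hi t
  · simpa [his, hit] using hi i

lemma domLE_of_transfer (hd : DomLE l₁ l₂) (hs : l₁ s < l₂ s) (hst : s < t)
    (hbetween : ∀ j, s < j → j < t → l₁ j ≤ l₂ j)
    (h : l' + Pi.single s 1 = l₂ + Pi.single t 1) : DomLE l₁ l' := by
  intro k
  have hk := sum_range_add_ite_of_transfer h k
  by_cases hsk : s < k
  · by_cases htk : t < k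
    · simp only [hsk, htk, if_true] at hk
      have := hd k
      omega
    · have hlt : ∑ i ∈ Ico s k, l₁ i < ∑ i ∈ Ico s k, l₂ i := by
        refine sum_lt_sum (fun j hj => ?_) ⟨s, by simp [hsk], hs⟩
        obtain ⟨hsj, hjk⟩ := mem_Ico.1 hj
        rcases hsj.eq_or_lt with rfl | hsj
        · exact hs.le
        · exact hbetween j hsj (by omega)
      have := hd s
      rw [← sum_range_add_sum_Ico l₁ hsk.le]
      rw [← sum_range_add_sum_Ico l₂ hsk.le] at hk
      simp only [hsk, htk, if_true, if_false] at hk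
      omega
  · simp only [hsk, show ¬t < k by omega, if_false] at hk
    have := hd k
    omega

lemma exists_transfer_target (hd : DomLE l₁ l₂)
    (hsum : ∑ i ∈ range N, l₁ i = ∑ i ∈ range N, l₂ i) (hs : l₁ s < l₂ s) (hsN : s < N) :
    ∃ t, s < t ∧ l₂ t < l₁ t ∧ ∀ j, s < j → j < t → l₁ j ≤ l₂ j := by
  have hex : ∃ t, s < t ∧ l₂ t < l₁ t := by
    by_contra! hle
    have hlt : ∑ i ∈ Ico s N, l₁ i < ∑ i ∈ Ico s N, l₂ i := by
      refine sum_lt_sum (fun j hj => ?_) ⟨s, by simp [hsN], hs⟩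
      rcases (mem_Ico.1 hj).1.eq_or_lt with rfl | hsj
      · exact hs.le
      · exact hle j hsj
    have := hd s
    rw [← sum_range_add_sum_Ico l₁ hsN.le, ← sum_range_add_sum_Ico l₂ hsN.le] at hsum
    omega
  refine ⟨Nat.find hex, (Nat.find_spec hex).1, (Nat.find_spec hex).2, fun j hsj hjt => ?_⟩
  by_contra! hlt
  exact Nat.find_min hex hjt ⟨hsj, hlt⟩

lemma sum_range_tsub_lt_of_transfer (hs : l₁ s < l₂ s) (ht : l₂ t < l₁ t) (hsN : s < N)
    (h : l' + Pi.single s 1 = l₂ + Pi.single t 1) :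
    ∑ i ∈ range N, (l' i - l₁ i) < ∑ i ∈ range N, (l₂ i - l₁ i) := by
  obtain ⟨hl's, hl't, hl'⟩ := apply_of_transfer h (by rintro rfl; omega)
  refine sum_lt_sum (fun i _ => ?_) ⟨s, mem_range.2 hsN, by omega⟩
  by_cases his : i = s
  · subst his; omega
  by_cases hit : i = t
  · subst hit; omega
  · rw [hl' i his hit]

end Transfer

lemma card_filter_insert_erase {α : Type*} [DecidableEq α] {S : Finset α} {x y : α}
    (hx : x ∉ S) (hy : y ∈ S) (P : α → Prop) [DecidablePred P] :
    #((insert x (S.erase y)).filter P) + (if P y then 1 else 0) =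
      #(S.filter P) + (if P x then 1 else 0) := by
  simp only [card_filter]
  rw [sum_insert fun h => hx (mem_of_mem_erase h), add_assoc, sum_erase_add _ _ hy, add_comm]

lemma card_image_snd_filter_fst (S : Finset (ℕ × ℕ × ℕ)) (i : ℕ) :
    #((S.filter fun p => p.1 = i).image Prod.snd) = #(S.filter fun p => p.1 = i) :=
  card_image_of_injOn fun _ hp _ hq hpq =>
    Prod.ext ((mem_filter.1 hp).2.trans (mem_filter.1 hq).2.symm) hpq

lemma HasMarginals.exists_transfer {S : Finset (ℕ × ℕ × ℕ)} {l m v : ℕ → ℕ} {s t : ℕ}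
    (h : HasMarginals S l m v) (hlt : l t < l s) :
    ∃ S' l', HasMarginals S' l' m v ∧ l' + Pi.single s 1 = l + Pi.single t 1 := by
  obtain ⟨hl, hm, hv⟩ := h
  obtain ⟨q, hqs, hqt⟩ := exists_mem_notMem_of_card_lt_card
    (s := (S.filter fun p => p.1 = t).image Prod.snd)
    (t := (S.filter fun p => p.1 = s).image Prod.snd)
    (by rwa [card_image_snd_filter_fst, card_image_snd_filter_fst, hl, hl])
  have hy : (s, q) ∈ S := by
    simp only [mem_image, mem_filter] at hqs
    obtain ⟨_, ⟨hp, rfl⟩, rfl⟩ := hqs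
    exact hp
  have hx : (t, q) ∉ S := fun hmem => hqt (mem_image.2 ⟨(t, q), mem_filter.2 ⟨hmem, rfl⟩, rfl⟩)
  have key := card_filter_insert_erase hx hy
  refine ⟨_, fun i => #((insert (t, q) (S.erase (s, q))).filter fun p => p.1 = i),
    ⟨fun i => rfl, fun j => ?_, fun k => ?_⟩, funext fun i => ?_⟩
  · simpa [hm j] using key fun p => p.2.1 = j
  · simpa [hv k] using key fun p => p.2.2 = k
  · simp only [Pi.add_apply, Pi.single_apply, ← hl i]
    simpa [eq_comm] using key fun p => p.1 = i

lemma HasMarginals.rotate {S : Finset (ℕ × ℕ × ℕ)} {l m v : ℕ → ℕ} (h : HasMarginals S l m v) :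
    HasMarginals (S.image fun p => (p.2.1, p.2.2, p.1)) m v l := by
  have hinj : Function.Injective fun p : ℕ × ℕ × ℕ => (p.2.1, p.2.2, p.1) :=
    fun ⟨_, _, _⟩ ⟨_, _, _⟩ h => by simp_all
  obtain ⟨hl, hm, hv⟩ := h
  refine ⟨fun i => ?_, fun j => ?_, fun k => ?_⟩ <;>
    rw [filter_image, card_image_of_injective _ hinj]
  exacts [hm i, hv j, hl k]

lemma IsPartition.eventually {l : ℕ → ℕ} {n : ℕ} (h : IsPartition l n) :
    ∀ᶠ N in Filter.atTop, (∀ i, N ≤ i → l i = 0) ∧ ∑ i ∈ range N, l i = n := by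
  obtain ⟨-, N₀, hz, hsum⟩ := h
  filter_upwards [Filter.eventually_ge_atTop N₀] with N hN
  exact ⟨fun i hi => hz i (hN.trans hi), hsum ▸ eventually_constant_sum hz hN⟩

lemma exists_hasMarginals_of_domLE_of_sum_eq {l₁ l₂ m v : ℕ → ℕ} {N : ℕ} (hanti : Antitone l₁)
    (hz₁ : ∀ i, N ≤ i → l₁ i = 0) (hz₂ : ∀ i, N ≤ i → l₂ i = 0)
    (hsum : ∑ i ∈ range N, l₁ i = ∑ i ∈ range N, l₂ i) (hd : DomLE l₁ l₂)
    (h : ∃ S, HasMarginals S l₂ m v) : ∃ S, HasMarginals S l₁ m v := by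
  by_cases hex : ∃ s, l₁ s < l₂ s
  · obtain ⟨s, hs⟩ := hex
    have hsN : s < N := by
      by_contra! hNs
      simp [hz₂ s hNs] at hs
    obtain ⟨t, hst, ht, hbetween⟩ := exists_transfer_target hd hsum hs hsN
    have htN : t < N := by
      by_contra! hNt
      simp [hz₁ t hNt] at ht
    obtain ⟨S, hS⟩ := h
    obtain ⟨S', l', hS', hl'⟩ := hS.exists_transfer (ht.trans_le (hanti hst.le) |>.trans hs)
    have hsum' := sum_range_add_ite_of_transfer hl' N
    simp only [hsN, htN, if_true] at hsum'
    obtain ⟨-, -, hl'_eq⟩ := apply_of_transfer hl' hst.ne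
    exact exists_hasMarginals_of_domLE_of_sum_eq hanti hz₁
      (fun i hi => (hl'_eq i (by omega) (by omega)).trans (hz₂ i hi)) (by omega)
      (domLE_of_transfer hd hs hst hbetween hl') ⟨S', hS'⟩
  · simp only [not_exists, not_lt] at hex
    have hle : ∀ i ∈ range N, l₂ i ≤ l₁ i := fun i _ => hex i
    have : l₂ = l₁ := funext fun i => by
      by_cases hi : i < N
      · exact (sum_eq_sum_iff_of_le hle).1 hsum.symm i (mem_range.2 hi)
      · rw [hz₁ i (not_lt.1 hi), hz₂ i (not_lt.1 hi)]
    exact this ▸ h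
termination_by ∑ i ∈ range N, (l₂ i - l₁ i)
decreasing_by exact sum_range_tsub_lt_of_transfer hs ht hsN hl'

lemma exists_hasMarginals_of_domLE_s3 {n : ℕ} {l₁ l₂ m v : ℕ → ℕ} (hl₁ : IsPartition l₁ n)
    (hl₂ : IsPartition l₂ n) (hd : DomLE l₁ l₂) (h : ∃ S, HasMarginals S l₂ m v) :
    ∃ S, HasMarginals S l₁ m v := by
  obtain ⟨N, ⟨hz₁, hsum₁⟩, hz₂, hsum₂⟩ := (hl₁.eventually.and hl₂.eventually).exists
  exact exists_hasMarginals_of_domLE_of_sum_eq hl₁.1 hz₁ hz₂ (hsum₁.trans hsum₂.symm) hd h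

lemma exists_hasMarginals_rotate {l m v : ℕ → ℕ} (h : ∃ S, HasMarginals S l m v) :
    ∃ S, HasMarginals S m v l :=
  let ⟨_, hS⟩ := h
  ⟨_, hS.rotate⟩

/-- monotonicity of realizability in all three marginals. -/
theorem stmt3 (n : ℕ) (l1 l2 m1 m2 v1 v2 : ℕ → ℕ)
    (hl1 : IsPartition l1 n) (hl2 : IsPartition l2 n)
    (hm1 : IsPartition m1 n) (hm2 : IsPartition m2 n)
    (hv1 : IsPartition v1 n) (hv2 : IsPartition v2 n)
    (hdl : DomLE l1 l2) (hdm : DomLE m1 m2) (hdv : DomLE v1 v2)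
    (h : ∃ S : Finset (ℕ × ℕ × ℕ), HasMarginals S l2 m2 v2) :
    ∃ S : Finset (ℕ × ℕ × ℕ), HasMarginals S l1 m1 v1 := by
  have h₁ : ∃ S, HasMarginals S m2 v2 l1 :=
    exists_hasMarginals_rotate (exists_hasMarginals_of_domLE_s3 hl1 hl2 hdl h)
  have h₂ : ∃ S, HasMarginals S v2 l1 m1 :=
    exists_hasMarginals_rotate (exists_hasMarginals_of_domLE_s3 hm1 hm2 hdm h₁)
  exact exists_hasMarginals_rotate (exists_hasMarginals_of_domLE_s3 hv1 hv2 hdv h₂)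
end

section
/- Let λ, μ be partitions of 3n with λ ⪯ μ in the dominance order. If there exists a 3-uniform hypergraph whose degree sequence (sorted non-increasingly) equals μ, then there exists a 3-uniform hypergraph whose degree sequence equals λ. -/
open Finset

/-! In an `r`-uniform hypergraph one unit of degree can always be moved from a vertex `u` to a
vertex `w` of smaller degree: as more edges contain `u` but not `w` than the other way round, some
edge through `u` but not `w` stops being an edge when `u` is replaced by `w`, and exchanging the
two edges does the move. If `l ⪯ m` and `l ≠ m`, then `l a < m a` at the first index `a` where
they differ, and at the first later index `b` where the prefix sums of `m` come back down to those
of `l` we have `m b < l b ≤ l a < m a`. Moving a unit from `a` to `b` keeps `l ⪯ m` and lowers the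
sum of the prefix sums of `m`, so finitely many moves turn `m` into `l`. Only `l` has to be
non-increasing, so the intermediate sequences need not be sorted. -/

def Realizable (r : ℕ) (m : ℕ → ℕ) : Prop :=
  ∃ E : Finset (Finset ℕ), (∀ e ∈ E, e.card = r) ∧ DegSeqOf E m

lemma hdeg_insert_erase_add {E : Finset (Finset ℕ)} {s t : Finset ℕ} (hs : s ∈ E) (ht : t ∉ E)
    (x : ℕ) :
    hdeg (insert t (E.erase s)) x + (if x ∈ s then 1 else 0) =
      hdeg E x + (if x ∈ t then 1 else 0) := by
  have ht' : t ∉ (E.erase s).filter (x ∈ ·) := fun h => ht (mem_of_mem_erase (mem_filter.1 h).1)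
  unfold hdeg
  rw [filter_insert, filter_erase]
  split_ifs with hxt hxs hxs
  · rw [card_insert_of_notMem (by rwa [← filter_erase]),
      card_erase_add_one (mem_filter.2 ⟨hs, hxs⟩)]
  · rw [card_insert_of_notMem (by rwa [← filter_erase]),
      erase_eq_of_notMem (by simp [hxs])]
  · rw [add_zero, card_erase_add_one (mem_filter.2 ⟨hs, hxs⟩)]
  · rw [erase_eq_of_notMem (by simp [hxs])]

lemma exists_exchange_of_hdeg_lt {r : ℕ} {E : Finset (Finset ℕ)} (hE : ∀ s ∈ E, s.card = r)
    {u w : ℕ} (hlt : hdeg E w < hdeg E u) :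
    ∃ E' : Finset (Finset ℕ), (∀ s ∈ E', s.card = r) ∧
      ∀ x, hdeg E' x + (if x = u then 1 else 0) = hdeg E x + (if x = w then 1 else 0) := by
  have huw : u ≠ w := by rintro rfl; exact lt_irrefl _ hlt
  set A := E.filter fun s => u ∈ s ∧ w ∉ s
  set B := E.filter fun s => w ∈ s ∧ u ∉ s
  let shift : Finset ℕ → Finset ℕ := fun s => insert w (s.erase u)
  have hshift : ∀ s ∈ A, insert u ((shift s).erase w) = s := fun s hs => by
    obtain ⟨-, hu, hw⟩ := mem_filter.1 hs
    rw [erase_insert (by simp [hw]), insert_erase hu]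
  have hsplit : ∀ x y, #(E.filter fun s => x ∈ s ∧ y ∈ s) + #(E.filter fun s => x ∈ s ∧ y ∉ s)
      = hdeg E x := fun x y => by
    rw [hdeg, ← card_filter_add_card_filter_not (s := E.filter (x ∈ ·)) (y ∈ ·), filter_filter,
      filter_filter]
  have hAB : B.card < A.card := by
    have hu : #(E.filter fun s => u ∈ s ∧ w ∈ s) + #A = hdeg E u := hsplit u w
    have hw : #(E.filter fun s => w ∈ s ∧ u ∈ s) + #B = hdeg E w := hsplit w u
    rw [filter_congr fun _ _ => and_comm] at hw
    omega
  obtain ⟨s, hsA, hsE⟩ : ∃ s ∈ A, shift s ∉ E := by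
    by_contra! hcon
    have himg : A.image shift ⊆ B := fun t ht => by
      obtain ⟨s, hs, rfl⟩ := mem_image.1 ht
      simp [B, shift, hcon s hs, huw]
    have hinj : Set.InjOn shift A := fun s hs t ht hst => by
      rw [← hshift s hs, ← hshift t ht]; simp only [hst]
    have := card_le_card himg
    rw [card_image_of_injOn hinj] at this
    omega
  obtain ⟨hs, hus, hws⟩ := mem_filter.1 hsA
  refine ⟨insert (shift s) (E.erase s), ?_, fun x => ?_⟩
  · intro e he
    rcases mem_insert.1 he with rfl | he
    · rw [card_insert_of_notMem (by simp [hws]), card_erase_add_one hus, hE s hs]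
    · exact hE e (mem_of_mem_erase he)
  · have := hdeg_insert_erase_add hs hsE x
    by_cases hxu : x = u <;> by_cases hxw : x = w <;> simp_all [shift]

lemma Realizable.exists_move {r : ℕ} {m : ℕ → ℕ} (hm : Realizable r m) {a b : ℕ}
    (hba : m b < m a) :
    ∃ m', Realizable r m' ∧
      ∀ v, m' v + (if v = a then 1 else 0) = m v + (if v = b then 1 else 0) := by
  obtain ⟨E, hE, e, he⟩ := hm
  obtain ⟨E', hE', hdeg'⟩ := exists_exchange_of_hdeg_lt hE (u := e a) (w := e b)
    (by rwa [he, he])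
  refine ⟨fun v => hdeg E' (e v), ⟨E', hE', e, fun _ => rfl⟩, fun v => ?_⟩
  simpa only [he, e.injective.eq_iff] using hdeg' (e v)

lemma sum_range_add_ite_of_move {f g : ℕ → ℕ} {a b : ℕ}
    (h : ∀ v, f v + (if v = a then 1 else 0) = g v + (if v = b then 1 else 0)) (k : ℕ) :
    ∑ i ∈ range k, f i + (if a < k then 1 else 0) =
      ∑ i ∈ range k, g i + (if b < k then 1 else 0) := by
  have : ∑ v ∈ range k, (f v + if v = a then 1 else 0) =
      ∑ v ∈ range k, (g v + if v = b then 1 else 0) := sum_congr rfl fun v _ => h v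
  simpa only [sum_add_distrib, sum_ite_eq', mem_range] using this

lemma exists_move_of_domLE {l m : ℕ → ℕ} (hl : Antitone l) {C : ℕ}
    (hC : ∀ k, C ≤ k → ∑ i ∈ range k, m i = ∑ i ∈ range k, l i)
    (hdom : DomLE l m) (hne : l ≠ m) :
    ∃ a b, a < b ∧ b < C ∧ m b < m a ∧
      ∀ k, a < k → k ≤ b → ∑ i ∈ range k, l i < ∑ i ∈ range k, m i := by
  obtain ⟨a, hla, hpre⟩ : ∃ a, l a < m a ∧ ∑ i ∈ range a, l i = ∑ i ∈ range a, m i := by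
    have hdiff : ∃ i, l i ≠ m i := Function.ne_iff.1 hne
    have hpre : ∑ i ∈ range (Nat.find hdiff), l i = ∑ i ∈ range (Nat.find hdiff), m i :=
      sum_congr rfl fun i hi => not_not.1 (Nat.find_min hdiff (mem_range.1 hi))
    refine ⟨Nat.find hdiff, lt_of_le_of_ne ?_ (Nat.find_spec hdiff), hpre⟩
    have := hdom (Nat.find hdiff + 1)
    rw [sum_range_succ, sum_range_succ, hpre] at this
    omega
  have haC : a < C := by
    by_contra! h
    have := hC (a + 1) (by omega)
    rw [sum_range_succ, sum_range_succ, hC a h] at this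
    omega
  obtain ⟨b, hab, hbback, hbmin⟩ : ∃ b, a < b ∧
      ∑ i ∈ range (b + 1), m i ≤ ∑ i ∈ range (b + 1), l i ∧
      ∀ j, a < j → j < b → ∑ i ∈ range (j + 1), l i < ∑ i ∈ range (j + 1), m i := by
    have hback : ∃ j, a < j ∧ ∑ i ∈ range (j + 1), m i ≤ ∑ i ∈ range (j + 1), l i :=
      ⟨C, haC, (hC _ (by omega)).le⟩
    exact ⟨Nat.find hback, (Nat.find_spec hback).1, (Nat.find_spec hback).2,
      fun j haj hjb => not_le.1 fun h => Nat.find_min hback hjb ⟨haj, h⟩⟩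
  have hgap : ∀ k, a < k → k ≤ b → ∑ i ∈ range k, l i < ∑ i ∈ range k, m i := by
    intro k hak hkb
    obtain ⟨j, rfl⟩ : ∃ j, k = j + 1 := ⟨k - 1, by omega⟩
    rcases (show a = j ∨ a < j by omega) with rfl | haj
    · rw [sum_range_succ, sum_range_succ, hpre]; omega
    · exact hbmin j haj (by omega)
  have hbC : b < C := by
    by_contra! h
    exact (hgap b hab le_rfl).ne' (hC b h)
  refine ⟨a, b, hab, hbC, ?_, hgap⟩
  have := hgap b hab le_rfl
  rw [sum_range_succ, sum_range_succ] at hbback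
  have := hl hab.le
  omega

theorem Realizable.of_domLE {r : ℕ} {l m : ℕ → ℕ} (hl : Antitone l) {C : ℕ}
    (hC : ∀ k, C ≤ k → ∑ i ∈ range k, m i = ∑ i ∈ range k, l i)
    (hdom : DomLE l m) (hm : Realizable r m) : Realizable r l := by
  induction hμ : ∑ k ∈ range C, ∑ i ∈ range k, m i using Nat.strong_induction_on
    generalizing m with
  | _ μ ih =>
  by_cases hlm : l = m
  · exact hlm ▸ hm
  obtain ⟨a, b, hab, hbC, hba, hgap⟩ := exists_move_of_domLE hl hC hdom hlm
  obtain ⟨m', hm', hmove⟩ := hm.exists_move hba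
  have hsum := sum_range_add_ite_of_move hmove
  have hle : ∀ k, ∑ i ∈ range k, m' i ≤ ∑ i ∈ range k, m i := fun k => by
    have := hsum k; split_ifs at this <;> omega
  refine ih _ ?_ (fun k hk => ?_) (fun k => ?_) hm' rfl
  · rw [← hμ]
    refine sum_lt_sum (fun k _ => hle k) ⟨b, mem_range.2 hbC, ?_⟩
    have := hsum b
    rw [if_pos hab, if_neg (lt_irrefl b)] at this
    omega
  · have := hsum k
    rw [if_pos (by omega), if_pos (by omega)] at this
    rw [← hC k hk]; omega
  · have hk := hsum k
    have := hdom k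
    split_ifs at hk with hak hbk
    · omega
    · have := hgap k hak (not_lt.1 hbk); omega
    · omega
    · omega

lemma sum_range_eq_of_le {f : ℕ → ℕ} {N k : ℕ} (hf : ∀ i, N ≤ i → f i = 0) (hk : N ≤ k) :
    ∑ i ∈ range k, f i = ∑ i ∈ range N, f i :=
  (sum_subset (range_subset_range.2 hk) fun i _ hi => hf i (by simpa using hi)).symm

/-- monotonicity of hypergraph realizability under dominance. -/
theorem stmt5 (n : ℕ) (l m : ℕ → ℕ)
    (hl : IsPartition l (3 * n)) (hm : IsPartition m (3 * n))
    (hdom : DomLE l m)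
    (h : ∃ E : Finset (Finset ℕ), (∀ e ∈ E, e.card = 3) ∧ DegSeqOf E m) :
    ∃ E : Finset (Finset ℕ), (∀ e ∈ E, e.card = 3) ∧ DegSeqOf E l := by
  obtain ⟨hla, Nl, hNl, hsuml⟩ := hl
  obtain ⟨-, Nm, hNm, hsumm⟩ := hm
  refine Realizable.of_domLE hla (C := max Nl Nm) (fun k hk => ?_) hdom h
  rw [sum_range_eq_of_le hNm (le_of_max_le_right hk), sum_range_eq_of_le hNl (le_of_max_le_left hk),
    hsuml, hsumm]
end

section
/- Let M be a three-dimensional binary pyramid with marginals (λ, μ, ν), and let ρ be the partition obtained by sorting the column heights (Σ_k M(i,j,k))_{i,j} in non-increasing order. Then ρ equals ν', the conjugate of ν. -/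
open Finset

/-!
In a pyramid every column `{k | (a, b, k) ∈ S}` is an initial segment `[0, h)` of `ℕ`, where `h`
is the column height. Hence the `k`-th layer marginal `ν k` counts the columns of height `> k`,
so `ν` is the conjugate of the sorted column heights `ρ`, and `ν' = ρ'' = ρ`.
-/

lemma IsLowerSet.eq_Iio_ncard {s : Set ℕ} (hs : IsLowerSet s) (hfin : s.Finite) :
    s = Set.Iio s.ncard := by
  obtain h | ⟨a, rfl⟩ := hs.eq_univ_or_Iio
  · exact absurd (h ▸ hfin) Set.infinite_univ
  · rw [Set.ncard_Iio_nat]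

lemma Antitone.lt_iff_lt_ncard {f : ℕ → ℕ} (hf : Antitone f) {k : ℕ}
    (hfin : {r | k < f r}.Finite) (r : ℕ) : k < f r ↔ r < {r | k < f r}.ncard := by
  have hlow : IsLowerSet {r | k < f r} := fun _ _ hba ha => lt_of_lt_of_le ha (hf hba)
  exact Set.ext_iff.mp (hlow.eq_Iio_ncard hfin) r

lemma conj_ncard_setOf_lt {f : ℕ → ℕ} (hf : Antitone f) (hfin : ∀ k, {r | k < f r}.Finite)
    (r : ℕ) : conj (fun k => {r | k < f r}.ncard) r = f r := by
  have hlevel : {k | r + 1 ≤ {r | k < f r}.ncard} = Set.Iio (f r) :=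
    Set.ext fun k => (hf.lt_iff_lt_ncard (hfin k) r).symm
  rw [conj, hlevel, Set.ncard_Iio_nat]

def colHeight (S : Finset (ℕ × ℕ × ℕ)) (p : ℕ × ℕ) : ℕ :=
  #(S.filter fun q => q.1 = p.1 ∧ q.2.1 = p.2)

namespace IsPyramid

variable {S : Finset (ℕ × ℕ × ℕ)}

lemma mem_iff_lt_colHeight (hS : IsPyramid S) (a b k : ℕ) :
    (a, b, k) ∈ S ↔ k < colHeight S (a, b) := by
  set col : Set ℕ := {k | (a, b, k) ∈ S}
  have hinj : Function.Injective fun k : ℕ => (a, b, k) := fun _ _ h => by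
    simpa using h
  have hfin : col.Finite := S.finite_toSet.preimage hinj.injOn
  have hlow : IsLowerSet col := fun _ _ hkl hl => hS a b _ a b _ le_rfl le_rfl hkl hl
  have hcard : col.ncard = colHeight S (a, b) := by
    rw [colHeight, ← Set.ncard_coe_finset, ← Set.ncard_image_of_injective col hinj]
    congr 1
    ext ⟨x, y, z⟩
    simp only [Set.mem_image, Set.mem_ofPred_eq, coe_filter, Prod.mk.injEq, col]
    constructor
    · rintro ⟨k, hk, rfl, rfl, rfl⟩
      exact ⟨hk, rfl, rfl⟩
    · rintro ⟨hmem, rfl, rfl⟩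
      exact ⟨z, hmem, rfl, rfl, rfl⟩
  rw [← hcard]
  exact Set.ext_iff.mp (hlow.eq_Iio_ncard hfin) k

lemma setOf_lt_colHeight (hS : IsPyramid S) (k : ℕ) :
    {p | k < colHeight S p} = ↑((S.filter fun q => q.2.2 = k).image fun q => (q.1, q.2.1)) := by
  ext ⟨a, b⟩
  simp only [Set.mem_ofPred_eq, coe_image, coe_filter, Set.mem_image, Prod.mk.injEq,
    ← hS.mem_iff_lt_colHeight]
  constructor
  · intro hmem
    exact ⟨(a, b, k), ⟨hmem, rfl⟩, rfl, rfl⟩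
  · rintro ⟨⟨x, y, z⟩, ⟨hmem, rfl⟩, rfl, rfl⟩
    exact hmem

lemma ncard_setOf_lt_colHeight (hS : IsPyramid S) (k : ℕ) :
    {p | k < colHeight S p}.ncard = #(S.filter fun q => q.2.2 = k) := by
  rw [hS.setOf_lt_colHeight, Set.ncard_coe_finset]
  refine card_image_of_injOn fun q hq q' hq' h => ?_
  simp only [coe_filter, Set.mem_ofPred_eq] at hq hq'
  simp only [Prod.mk.injEq] at h
  exact Prod.ext h.1 (Prod.ext h.2 (hq.2.trans hq'.2.symm))

end IsPyramid

/-- in a pyramid, the sorted column heights give the conjugate of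
the third marginal. -/
theorem stmt6 (S : Finset (ℕ × ℕ × ℕ)) (hpyr : IsPyramid S)
    (l m v rho : ℕ → ℕ) (hM : HasMarginals S l m v)
    (hrho : Antitone rho) (g : ℕ ≃ ℕ × ℕ)
    (hg : ∀ r, rho r =
      (S.filter fun p => p.1 = (g r).1 ∧ p.2.1 = (g r).2).card) :
    ∀ r, rho r = conj v r := by
  have hlayer : ∀ k, g ⁻¹' {p | k < colHeight S p} = {r | k < rho r} := fun k => by
    ext r
    simp only [Set.mem_preimage, Set.mem_ofPred_eq, hg, colHeight]
  have hfin : ∀ k, {r | k < rho r}.Finite := fun k => by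
    rw [← hlayer, hpyr.setOf_lt_colHeight]
    exact (finite_toSet _).preimage g.injective.injOn
  have hv : v = fun k => {r | k < rho r}.ncard := funext fun k => by
    rw [← hM.2.2 k, ← hlayer, Set.ncard_preimage_of_injective_subset_range g.injective
      (by simp), hpyr.ncard_setOf_lt_colHeight]
  intro r
  rw [hv, conj_ncard_setOf_lt hrho hfin]
end

section
/- Let M be a three-dimensional binary pyramid with Σ M(i,j,k) = n and marginals (λ, μ, ν). Then ν' ⪯ λ in the dominance order, where ν' is the conjugate partition of ν. -/
open Finset

/-
Both sides of `ν' ⪯ λ` at level `K` count cells. The left side is `∑ₖ min (ν k) K`, and the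
right side is the number of cells whose first coordinate is below `K`. Take the slice at
height `k`. Either every one of its cells has first coordinate below `K`, in which case all
`ν k` of them are counted, or some cell has first coordinate at least `K`, in which case
downward closure puts `(i, 0, k)` in the pyramid for every `i < K`.
-/

theorem conj_eq_card_filter {v : ℕ → ℕ} {T : Finset ℕ} (hT : ∀ k ∉ T, v k = 0) (r : ℕ) :
    conj v r = #{k ∈ T | r + 1 ≤ v k} := by
  rw [conj, ← Set.ncard_coe_finset]
  congr 1
  ext k
  simp only [Set.mem_ofPred_eq, coe_filter, iff_and_self]
  intro hk
  by_contra hkT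
  simp [hT k hkT] at hk

theorem sum_range_conj_eq_sum_min {v : ℕ → ℕ} {T : Finset ℕ} (hT : ∀ k ∉ T, v k = 0)
    (K : ℕ) : ∑ r ∈ range K, conj v r = ∑ k ∈ T, min (v k) K := by
  simp only [conj_eq_card_filter hT, card_filter]
  rw [sum_comm]
  refine sum_congr rfl fun k _ => ?_
  have hrange : {r ∈ range K | r + 1 ≤ v k} = range (min (v k) K) := by
    ext r
    simp only [mem_filter, mem_range]
    omega
  rw [← card_filter, hrange, card_range]

theorem card_filter_fst_lt_eq_sum {β : Type*} (S : Finset (ℕ × β)) (K : ℕ) :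
    #{p ∈ S | p.1 < K} = ∑ i ∈ range K, #{p ∈ S | p.1 = i} := by
  rw [card_eq_sum_card_fiberwise fun p hp => mem_range.mpr (mem_filter.mp hp).2]
  refine sum_congr rfl fun i hi => ?_
  rw [filter_filter]
  exact congrArg card <| filter_congr fun p _ => ⟨And.right, fun h => ⟨h ▸ mem_range.mp hi, h⟩⟩

theorem IsPyramid.min_card_slice_le {S : Finset (ℕ × ℕ × ℕ)} (hS : IsPyramid S) (K k : ℕ) :
    min #{p ∈ S | p.2.2 = k} K ≤ #{p ∈ {p ∈ S | p.1 < K} | p.2.2 = k} := by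
  by_cases htall : ∃ p ∈ S, p.2.2 = k ∧ K ≤ p.1
  · obtain ⟨⟨a, b, c⟩, hp, rfl, hKa⟩ := htall
    have hcol : ∀ i ∈ range K, (i, 0, c) ∈ {p ∈ {p ∈ S | p.1 < K} | p.2.2 = c} := by
      intro i hi
      have hiK := mem_range.mp hi
      simpa [hiK] using hS i 0 c a b c (by omega) b.zero_le le_rfl hp
    have hK := card_le_card_of_injOn (fun i => (i, 0, c)) hcol (fun _ _ _ _ h => by simpa using h)
    rw [card_range] at hK
    exact (min_le_right _ _).trans hK
  · push Not at htall
    refine (min_le_left _ _).trans (card_le_card fun p hp => ?_)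
    obtain ⟨hpS, hpk⟩ := mem_filter.mp hp
    simp [hpS, hpk, htall p hpS hpk]

theorem stmt7_general (S : Finset (ℕ × ℕ × ℕ)) (hpyr : IsPyramid S)
    (l m v : ℕ → ℕ) (hM : HasMarginals S l m v) :
    DomLE (conj v) l := by
  obtain ⟨hl, -, hv⟩ := hM
  intro K
  set T := S.image fun p => p.2.2
  have hT : ∀ k ∉ T, v k = 0 := fun k hk => by
    rw [← hv, card_eq_zero, filter_eq_empty_iff]
    exact fun p hp hpk => hk (mem_image.mpr ⟨p, hp, hpk⟩)
  calc ∑ r ∈ range K, conj v r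
      = ∑ k ∈ T, min (v k) K := sum_range_conj_eq_sum_min hT K
    _ ≤ ∑ k ∈ T, #{p ∈ {p ∈ S | p.1 < K} | p.2.2 = k} :=
        sum_le_sum fun k _ => hv k ▸ hpyr.min_card_slice_le K k
    _ = #{p ∈ S | p.1 < K} :=
        (card_eq_sum_card_fiberwise fun p hp => mem_image_of_mem _ (mem_filter.mp hp).1).symm
    _ = ∑ i ∈ range K, l i := by simp only [card_filter_fst_lt_eq_sum, hl]

/-- in a pyramid, `ν' ⪯ λ`. -/
theorem stmt7 (n : ℕ) (S : Finset (ℕ × ℕ × ℕ)) (hpyr : IsPyramid S)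
    (l m v : ℕ → ℕ) (hM : HasMarginals S l m v) (hn : S.card = n) :
    DomLE (conj v) l :=
  stmt7_general S hpyr l m v hM
end
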